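/- Let B ⊆ A be an entwined C-extension, δ a cointegral on C, and σ: C → A⊗A a k-linear map with κ∘σ(c) = 1⊗c for all c ∈ C, where κ(a⊗a') = a·ρ(a'). Define γ = (δ⊗A)∘(C⊗λ), α = (A⊗δ)∘(ρ⊗C), and ℓ = (γ⊗α)∘(C⊗σ⊗C)∘(Δ⊗C)∘Δ. If σ is left C-colinear, i.e. (C⊗σ)∘Δ = (λ⊗A)∘σ, then ℓ = (A⊗α)∘(σ⊗C)∘Δ. -/
import Mathlib
set_option linter.unusedSectionVars false



open TensorProduct LinearMap

noncomputable section

variable {k : Type*} [Field k]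
variable {A : Type*} [Ring A] [Algebra k A]
variable {C : Type*} [AddCommGroup C] [Module k C] [Coalgebra k C]

/-- The map `(μ ⊗ C) ∘ (A ⊗ ψ)` on `(A ⊗ C) ⊗ A`, the right hand side of the
entwining compatibility conditions. -/
def entRHS (ψ : C ⊗[k] A →ₗ[k] A ⊗[k] C) : (A ⊗[k] C) ⊗[k] A →ₗ[k] A ⊗[k] C :=
  rTensor C (mul' k A) ∘ₗ (TensorProduct.assoc k A A C).symm.toLinearMap ∘ₗ
    lTensor A ψ ∘ₗ (TensorProduct.assoc k A C A).toLinearMap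

/-- A right-right entwining map `ψ : C ⊗ A → A ⊗ C`. -/
structure IsEntwining (ψ : C ⊗[k] A →ₗ[k] A ⊗[k] C) : Prop where
  mul_compat : ∀ (c : C) (a a' : A), ψ (c ⊗ₜ (a * a')) = entRHS ψ (ψ (c ⊗ₜ a) ⊗ₜ a')
  one_compat : ∀ c : C, ψ (c ⊗ₜ 1) = (1 : A) ⊗ₜ c
  comul_compat : ∀ (c : C) (a : A),
    lTensor A (Coalgebra.comul (R := k)) (ψ (c ⊗ₜ a)) =
      (TensorProduct.assoc k A C C)
        (rTensor C ψ ((TensorProduct.assoc k C A C).symm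
          (lTensor C ψ ((TensorProduct.assoc k C C A)
            ((Coalgebra.comul (R := k) c) ⊗ₜ a)))))
  counit_compat : ∀ (c : C) (a : A),
    (TensorProduct.rid k A) (lTensor A (Coalgebra.counit (R := k)) (ψ (c ⊗ₜ a))) =
      Coalgebra.counit (R := k) c • a

/-- `ρ : A → A ⊗ C` is a right `C`-coaction. -/
structure IsRightCoaction (ρ : A →ₗ[k] A ⊗[k] C) : Prop where
  coassoc : ∀ a : A,
    (TensorProduct.assoc k A C C) (rTensor C ρ (ρ a)) =
      lTensor A (Coalgebra.comul (R := k)) (ρ a)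
  counit_id : ∀ a : A,
    (TensorProduct.rid k A) (lTensor A (Coalgebra.counit (R := k)) (ρ a)) = a

/-- An entwined `C`-extension: a right `C`-comodule algebra structure on `A` given by a
bijective entwining map `ψ` (with inverse `ψinv`) and a coaction `ρ` satisfying
`ρ(a ã) = a₍₀₎ ψ(a₍₁₎ ⊗ ã)`. -/
structure IsEntwinedExtension (ψ : C ⊗[k] A →ₗ[k] A ⊗[k] C)
    (ψinv : A ⊗[k] C →ₗ[k] C ⊗[k] A) (ρ : A →ₗ[k] A ⊗[k] C) : Prop where
  entwining : IsEntwining ψ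
  coaction : IsRightCoaction ρ
  left_inv : ∀ x : C ⊗[k] A, ψinv (ψ x) = x
  right_inv : ∀ y : A ⊗[k] C, ψ (ψinv y) = y
  mul_coact : ∀ a b : A, ρ (a * b) = entRHS ψ (ρ a ⊗ₜ b)

/-- The induced left coaction `λ(a) = ψ⁻¹(a · ρ(1))`. -/
def leftCoact (ψinv : A ⊗[k] C →ₗ[k] C ⊗[k] A) (ρ : A →ₗ[k] A ⊗[k] C) :
    A →ₗ[k] C ⊗[k] A :=
  ψinv ∘ₗ rTensor C (mul' k A) ∘ₗ (TensorProduct.assoc k A A C).symm.toLinearMap ∘ₗ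
    (TensorProduct.mk k A (A ⊗[k] C)).flip (ρ 1)

/-- The lifted canonical map `κ : A ⊗ A → A ⊗ C`, `a ⊗ a' ↦ a · ρ(a')`. -/
def kappaMap (ρ : A →ₗ[k] A ⊗[k] C) : A ⊗[k] A →ₗ[k] A ⊗[k] C :=
  rTensor C (mul' k A) ∘ₗ (TensorProduct.assoc k A A C).symm.toLinearMap ∘ₗ lTensor A ρ

/-- A cointegral on the coalgebra `C`: `δ(c₍₁₎ ⊗ c₍₂₎) = ε(c)` and
`c₍₁₎ δ(c₍₂₎ ⊗ c') = δ(c ⊗ c'₍₁₎) c'₍₂₎`. -/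
def IsCointegral (δ : C ⊗[k] C →ₗ[k] k) : Prop :=
  (∀ c : C, δ (Coalgebra.comul (R := k) c) = Coalgebra.counit (R := k) c) ∧
  (∀ c c' : C,
    (TensorProduct.rid k C) (lTensor C δ ((TensorProduct.assoc k C C C)
      ((Coalgebra.comul (R := k) c) ⊗ₜ c'))) =
    (TensorProduct.lid k C) (rTensor C δ ((TensorProduct.assoc k C C C).symm
      (c ⊗ₜ (Coalgebra.comul (R := k) c')))))

/-- `γ = (δ ⊗ A) ∘ (C ⊗ λ) : C ⊗ A → A`. -/
def gammaMap (δ : C ⊗[k] C →ₗ[k] k) (lam : A →ₗ[k] C ⊗[k] A) : C ⊗[k] A →ₗ[k] A :=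
  (TensorProduct.lid k A).toLinearMap ∘ₗ rTensor A δ ∘ₗ
    (TensorProduct.assoc k C C A).symm.toLinearMap ∘ₗ lTensor C lam

/-- `α = (A ⊗ δ) ∘ (ρ ⊗ C) : A ⊗ C → A`. -/
def alphaMap (δ : C ⊗[k] C →ₗ[k] k) (ρ : A →ₗ[k] A ⊗[k] C) : A ⊗[k] C →ₗ[k] A :=
  (TensorProduct.rid k A).toLinearMap ∘ₗ lTensor A δ ∘ₗ
    (TensorProduct.assoc k A C C).toLinearMap ∘ₗ rTensor C ρ

/-- `ℓ = (γ ⊗ α) ∘ (C ⊗ σ ⊗ C) ∘ (Δ ⊗ C) ∘ Δ : C → A ⊗ A`. -/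
def ellMap (σ : C →ₗ[k] A ⊗[k] A) (γ : C ⊗[k] A →ₗ[k] A) (α : A ⊗[k] C →ₗ[k] A) :
    C →ₗ[k] A ⊗[k] A :=
  TensorProduct.map γ α ∘ₗ (TensorProduct.assoc k (C ⊗[k] A) A C).toLinearMap ∘ₗ
    rTensor C (TensorProduct.assoc k C A A).symm.toLinearMap ∘ₗ
    rTensor C (lTensor C σ) ∘ₗ rTensor C (Coalgebra.comul (R := k)) ∘ₗ
    Coalgebra.comul (R := k)

section Aux

variable {k : Type*} [Field k]
variable {A : Type*} [Ring A] [Algebra k A]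
variable {C : Type*} [AddCommGroup C] [Module k C] [Coalgebra k C]

lemma aux_mulFirst (b : A) (z : A ⊗[k] C) :
    rTensor C (mul' k A) ((TensorProduct.assoc k A A C).symm (b ⊗ₜ z)) =
      rTensor C (mulLeft k b) z := by
  induction z using TensorProduct.induction_on with
  | zero => simp
  | tmul a c => simp
  | add x y hx hy => simp only [tmul_add, map_add, hx, hy]

lemma leftCoact_eq (ψinv : A ⊗[k] C →ₗ[k] C ⊗[k] A) (ρ : A →ₗ[k] A ⊗[k] C) (a : A) :
    leftCoact ψinv ρ a = ψinv (rTensor C (mulLeft k a) (ρ 1)) := by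
  simp only [leftCoact, comp_apply, LinearEquiv.coe_coe, flip_apply, TensorProduct.mk_apply]
  rw [aux_mulFirst]

lemma psi_leftCoact {ψ : C ⊗[k] A →ₗ[k] A ⊗[k] C} {ψinv : A ⊗[k] C →ₗ[k] C ⊗[k] A}
    {ρ : A →ₗ[k] A ⊗[k] C} (hext : IsEntwinedExtension ψ ψinv ρ) (a : A) :
    ψ (leftCoact ψinv ρ a) = rTensor C (mulLeft k a) (ρ 1) := by
  rw [leftCoact_eq, hext.right_inv]

lemma psi_counit {ψ : C ⊗[k] A →ₗ[k] A ⊗[k] C} (hψ : IsEntwining ψ) (x : C ⊗[k] A) :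
    (TensorProduct.rid k A) (lTensor A (Coalgebra.counit (R := k)) (ψ x)) =
      (TensorProduct.lid k A) (rTensor A (Coalgebra.counit (R := k)) x) := by
  induction x using TensorProduct.induction_on with
  | zero => simp
  | tmul c a => rw [hψ.counit_compat]; simp
  | add x y hx hy => simp only [map_add, hx, hy]

lemma rid_rTensor (f : A →ₗ[k] A) (z : A ⊗[k] k) :
    (TensorProduct.rid k A) (rTensor k f z) = f ((TensorProduct.rid k A) z) := by
  induction z using TensorProduct.induction_on with
  | zero => simp
  | tmul a s => simp
  | add x y hx hy => simp only [map_add, hx, hy]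

lemma lam_counit {ψ : C ⊗[k] A →ₗ[k] A ⊗[k] C} {ψinv : A ⊗[k] C →ₗ[k] C ⊗[k] A}
    {ρ : A →ₗ[k] A ⊗[k] C} (hext : IsEntwinedExtension ψ ψinv ρ) (a : A) :
    (TensorProduct.lid k A)
      (rTensor A (Coalgebra.counit (R := k)) (leftCoact ψinv ρ a)) = a := by
  rw [← psi_counit hext.entwining, psi_leftCoact hext]
  have h1 : lTensor A (Coalgebra.counit (R := k)) (rTensor C (mulLeft k a) (ρ 1)) =
      rTensor k (mulLeft k a) (lTensor A (Coalgebra.counit (R := k)) (ρ 1)) := by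
    rw [← comp_apply (lTensor A (Coalgebra.counit (R := k))), lTensor_comp_rTensor,
      ← rTensor_comp_lTensor, comp_apply]
  rw [h1, rid_rTensor, hext.coaction.counit_id, mulLeft_apply, mul_one]

/-- The bijective map `Θ = (ψ ⊗ C) ∘ (C ⊗ ψ)` used to prove coassociativity of `λ`. -/
def thetaMap (ψ : C ⊗[k] A →ₗ[k] A ⊗[k] C) : (C ⊗[k] C) ⊗[k] A →ₗ[k] (A ⊗[k] C) ⊗[k] C :=
  rTensor C ψ ∘ₗ (TensorProduct.assoc k C A C).symm.toLinearMap ∘ₗ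
    lTensor C ψ ∘ₗ (TensorProduct.assoc k C C A).toLinearMap

lemma thetaMap_injective {ψ : C ⊗[k] A →ₗ[k] A ⊗[k] C} {ψinv : A ⊗[k] C →ₗ[k] C ⊗[k] A}
    (hli : ∀ x : C ⊗[k] A, ψinv (ψ x) = x) : Function.Injective (thetaMap ψ) := by
  have h1 : ψinv ∘ₗ ψ = LinearMap.id := LinearMap.ext hli
  have hr : ∀ w : (C ⊗[k] A) ⊗[k] C, rTensor C ψinv (rTensor C ψ w) = w := by
    intro w; rw [← comp_apply, ← rTensor_comp, h1, rTensor_id, id_coe, id_eq]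
  have hl : ∀ w : C ⊗[k] (C ⊗[k] A), lTensor C ψinv (lTensor C ψ w) = w := by
    intro w; rw [← comp_apply, ← lTensor_comp, h1, lTensor_id, id_coe, id_eq]
  have key : ∀ z, (TensorProduct.assoc k C C A).symm
      (lTensor C ψinv ((TensorProduct.assoc k C A C) (rTensor C ψinv (thetaMap ψ z)))) = z := by
    intro z
    simp only [thetaMap, comp_apply, LinearEquiv.coe_coe]
    rw [hr, LinearEquiv.apply_symm_apply, hl, LinearEquiv.symm_apply_apply]
  intro x y hxy
  rw [← key x, ← key y, hxy]

lemma comul_compat_map {ψ : C ⊗[k] A →ₗ[k] A ⊗[k] C} (hψ : IsEntwining ψ) (x : C ⊗[k] A) :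
    lTensor A (Coalgebra.comul (R := k)) (ψ x) =
      (TensorProduct.assoc k A C C)
        (thetaMap ψ (rTensor A (Coalgebra.comul (R := k)) x)) := by
  induction x using TensorProduct.induction_on with
  | zero => simp
  | tmul c a =>
      rw [rTensor_tmul]
      simpa only [thetaMap, comp_apply, LinearEquiv.coe_coe] using hψ.comul_compat c a
  | add x y hx hy => simp only [map_add, hx, hy]

lemma assoc_mulLeft (a : A) (w : (A ⊗[k] C) ⊗[k] C) :
    (TensorProduct.assoc k A C C).symm
        (rTensor (C ⊗[k] C) (mulLeft k a) ((TensorProduct.assoc k A C C) w)) =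
      rTensor C (rTensor C (mulLeft k a)) w := by
  have : (TensorProduct.assoc k A C C).symm.toLinearMap ∘ₗ
      rTensor (C ⊗[k] C) (mulLeft k a) ∘ₗ (TensorProduct.assoc k A C C).toLinearMap =
      rTensor C (rTensor C (mulLeft k a)) := by
    apply TensorProduct.ext_threefold
    intro b c c'
    simp
  exact LinearMap.congr_fun this w

lemma entRHS_tmul (ψ : C ⊗[k] A →ₗ[k] A ⊗[k] C) (b : A) (c : C) (a' : A) :
    entRHS ψ ((b ⊗ₜ c) ⊗ₜ a') = rTensor C (mulLeft k b) (ψ (c ⊗ₜ a')) := by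
  simp only [entRHS, comp_apply, LinearEquiv.coe_coe, assoc_tmul, lTensor_tmul]
  exact aux_mulFirst b _

lemma entRHS_mulLeft (ψ : C ⊗[k] A →ₗ[k] A ⊗[k] C) (a : A) (x : A ⊗[k] C) (b : A) :
    entRHS ψ ((rTensor C (mulLeft k a) x) ⊗ₜ b) =
      rTensor C (mulLeft k a) (entRHS ψ (x ⊗ₜ b)) := by
  induction x using TensorProduct.induction_on with
  | zero => simp
  | tmul a₁ c₁ =>
      rw [rTensor_tmul, mulLeft_apply, entRHS_tmul, entRHS_tmul, mulLeft_mul,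
        rTensor_comp, comp_apply]
  | add x y hx hy => simp only [map_add, add_tmul, hx, hy]

lemma claimA {ψ : C ⊗[k] A →ₗ[k] A ⊗[k] C} (hψ : IsEntwining ψ)
    (y : A ⊗[k] C) (c : C) (b : A) :
    rTensor C ψ ((TensorProduct.assoc k C A C).symm (c ⊗ₜ (rTensor C (mulLeft k b) y))) =
      rTensor C (entRHS ψ)
        ((TensorProduct.assoc k (A ⊗[k] C) A C).symm ((ψ (c ⊗ₜ b)) ⊗ₜ y)) := by
  induction y using TensorProduct.induction_on with
  | zero => simp
  | tmul b' c' =>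
      rw [rTensor_tmul, mulLeft_apply, assoc_symm_tmul, assoc_symm_tmul,
        rTensor_tmul, rTensor_tmul, hψ.mul_compat]
  | add x y hx hy => simp only [map_add, tmul_add, hx, hy]

lemma claimF {ψ : C ⊗[k] A →ₗ[k] A ⊗[k] C} {ψinv : A ⊗[k] C →ₗ[k] C ⊗[k] A}
    {ρ : A →ₗ[k] A ⊗[k] C} (hext : IsEntwinedExtension ψ ψinv ρ) (x : C ⊗[k] A) :
    rTensor C ψ ((TensorProduct.assoc k C A C).symm
        (lTensor C (ψ ∘ₗ leftCoact ψinv ρ) x)) =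
      rTensor C (entRHS ψ)
        ((TensorProduct.assoc k (A ⊗[k] C) A C).symm ((ψ x) ⊗ₜ (ρ 1))) := by
  induction x using TensorProduct.induction_on with
  | zero => simp
  | tmul c b =>
      rw [lTensor_tmul, comp_apply, psi_leftCoact hext]
      exact claimA hext.entwining (ρ 1) c b
  | add x y hx hy => simp only [map_add, add_tmul, hx, hy]

lemma claimB {ψ : C ⊗[k] A →ₗ[k] A ⊗[k] C} {ψinv : A ⊗[k] C →ₗ[k] C ⊗[k] A}
    {ρ : A →ₗ[k] A ⊗[k] C} (hext : IsEntwinedExtension ψ ψinv ρ) (a : A) (y : A ⊗[k] C) :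
    rTensor C (entRHS ψ) ((TensorProduct.assoc k (A ⊗[k] C) A C).symm
        ((rTensor C (mulLeft k a) (ρ 1)) ⊗ₜ y)) =
      rTensor C (rTensor C (mulLeft k a)) (rTensor C ρ y) := by
  induction y using TensorProduct.induction_on with
  | zero => simp
  | tmul b c =>
      rw [assoc_symm_tmul, rTensor_tmul, rTensor_tmul, rTensor_tmul, entRHS_mulLeft]
      have : entRHS ψ ((ρ 1) ⊗ₜ b) = ρ b := by
        rw [← hext.mul_coact, one_mul]
      rw [this]
  | add x y hx hy => simp only [map_add, tmul_add, hx, hy]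

lemma lam_coassoc {ψ : C ⊗[k] A →ₗ[k] A ⊗[k] C} {ψinv : A ⊗[k] C →ₗ[k] C ⊗[k] A}
    {ρ : A →ₗ[k] A ⊗[k] C} (hext : IsEntwinedExtension ψ ψinv ρ) (a : A) :
    rTensor A (Coalgebra.comul (R := k)) (leftCoact ψinv ρ a) =
      (TensorProduct.assoc k C C A).symm
        (lTensor C (leftCoact ψinv ρ) (leftCoact ψinv ρ a)) := by
  apply thetaMap_injective hext.left_inv
  -- LHS
  have hL : thetaMap ψ (rTensor A (Coalgebra.comul (R := k)) (leftCoact ψinv ρ a)) =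
      rTensor C (rTensor C (mulLeft k a)) (rTensor C ρ (ρ 1)) := by
    have h1 := comul_compat_map hext.entwining (leftCoact ψinv ρ a)
    have h2 : thetaMap ψ (rTensor A (Coalgebra.comul (R := k)) (leftCoact ψinv ρ a)) =
        (TensorProduct.assoc k A C C).symm
          (lTensor A (Coalgebra.comul (R := k)) (ψ (leftCoact ψinv ρ a))) := by
      rw [h1, LinearEquiv.symm_apply_apply]
    rw [h2, psi_leftCoact hext]
    have h3 : lTensor A (Coalgebra.comul (R := k)) (rTensor C (mulLeft k a) (ρ 1)) =
        rTensor (C ⊗[k] C) (mulLeft k a)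
          (lTensor A (Coalgebra.comul (R := k)) (ρ 1)) := by
      rw [← comp_apply (lTensor A (Coalgebra.comul (R := k))), lTensor_comp_rTensor,
        ← rTensor_comp_lTensor, comp_apply]
    rw [h3, ← hext.coaction.coassoc 1, assoc_mulLeft]
  rw [hL]
  -- RHS
  simp only [thetaMap, comp_apply, LinearEquiv.coe_coe, LinearEquiv.apply_symm_apply]
  have h4 : lTensor C ψ (lTensor C (leftCoact ψinv ρ) (leftCoact ψinv ρ a)) =
      lTensor C (ψ ∘ₗ leftCoact ψinv ρ) (leftCoact ψinv ρ a) := by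
    rw [lTensor_comp, comp_apply]
  rw [h4, claimF hext, psi_leftCoact hext, claimB hext]

lemma gamma_leftCoact {ψ : C ⊗[k] A →ₗ[k] A ⊗[k] C} {ψinv : A ⊗[k] C →ₗ[k] C ⊗[k] A}
    {ρ : A →ₗ[k] A ⊗[k] C} (hext : IsEntwinedExtension ψ ψinv ρ)
    {δ : C ⊗[k] C →ₗ[k] k} (hδ : IsCointegral δ) (a : A) :
    gammaMap δ (leftCoact ψinv ρ) (leftCoact ψinv ρ a) = a := by
  simp only [gammaMap, comp_apply, LinearEquiv.coe_coe]
  rw [← lam_coassoc hext a, ← comp_apply (rTensor A δ), ← rTensor_comp]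
  have hδΔ : δ ∘ₗ (Coalgebra.comul (R := k)) = Coalgebra.counit (R := k) :=
    LinearMap.ext hδ.1
  rw [hδΔ]
  exact lam_counit hext a

end Aux

/-- If the section `σ` of the lifted canonical map is left `C`-colinear,
`(C ⊗ σ) ∘ Δ = (λ ⊗ A) ∘ σ`, then the strong connection form reduces to
`ℓ = (A ⊗ α) ∘ (σ ⊗ C) ∘ Δ`. -/
theorem ell_of_left_colinear_section
    (ψ : C ⊗[k] A →ₗ[k] A ⊗[k] C) (ψinv : A ⊗[k] C →ₗ[k] C ⊗[k] A)
    (ρ : A →ₗ[k] A ⊗[k] C)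
    (hext : IsEntwinedExtension ψ ψinv ρ)
    (δ : C ⊗[k] C →ₗ[k] k) (hδ : IsCointegral δ)
    (σ : C →ₗ[k] A ⊗[k] A) (hσ : ∀ c : C, kappaMap ρ (σ c) = (1 : A) ⊗ₜ c)
    (hleft : ∀ c : C,
      lTensor C σ (Coalgebra.comul (R := k) c) =
        (TensorProduct.assoc k C A A) (rTensor A (leftCoact ψinv ρ) (σ c))) :
    ∀ c : C,
      ellMap σ (gammaMap δ (leftCoact ψinv ρ)) (alphaMap δ ρ) c =
        lTensor A (alphaMap δ ρ)
          ((TensorProduct.assoc k A A C)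
            (rTensor C σ (Coalgebra.comul (R := k) c))) := by
  intro c
  simp only [ellMap, comp_apply, LinearEquiv.coe_coe]
  have hcolin : lTensor C σ ∘ₗ (Coalgebra.comul (R := k)) =
      (TensorProduct.assoc k C A A).toLinearMap ∘ₗ rTensor A (leftCoact ψinv ρ) ∘ₗ σ :=
    LinearMap.ext fun c => by simpa using hleft c
  have h1 : rTensor C (lTensor C σ)
      (rTensor C (Coalgebra.comul (R := k)) (Coalgebra.comul (R := k) c)) =
      rTensor C ((TensorProduct.assoc k C A A).toLinearMap ∘ₗ
        rTensor A (leftCoact ψinv ρ) ∘ₗ σ) (Coalgebra.comul (R := k) c) := by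
    rw [← comp_apply, ← rTensor_comp, hcolin]
  rw [h1, ← comp_apply (rTensor C (TensorProduct.assoc k C A A).symm.toLinearMap),
    ← rTensor_comp]
  have h2 : (TensorProduct.assoc k C A A).symm.toLinearMap ∘ₗ
      ((TensorProduct.assoc k C A A).toLinearMap ∘ₗ rTensor A (leftCoact ψinv ρ) ∘ₗ σ) =
      rTensor A (leftCoact ψinv ρ) ∘ₗ σ :=
    LinearMap.ext fun c => by simp
  rw [h2]
  -- main computation, by induction on `Δ c`
  induction (Coalgebra.comul (R := k) c) using TensorProduct.induction_on with
  | zero => simp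
  | tmul c₁ c₂ =>
      rw [rTensor_tmul, rTensor_tmul, comp_apply]
      generalize σ c₁ = s
      induction s using TensorProduct.induction_on with
      | zero => simp
      | tmul a a' =>
          rw [rTensor_tmul, assoc_tmul, assoc_tmul, map_tmul, lTensor_tmul,
            gamma_leftCoact hext hδ]
      | add s t hs ht =>
          rw [map_add, add_tmul, map_add, map_add, add_tmul, map_add, map_add, hs, ht]
  | add x y hx hy => simp only [map_add, hx, hy]
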